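/- Under hypotheses (H), let ĉ := lim_{s→∞} f(s), which exists and is positive since f is increasing and bounded. Then lim_{s→∞} f'(s)²·g(s)²/(n·j(f(s))²) = 0 and lim_{s→∞} E(s)·g(s)²/(n·j(f(s))²) = 1; consequently lim_{s→∞} E(s)·s^{2δ} = n·j(ĉ)²/C₁². -/

import Mathlib

/-!
The `p`-harmonic equation is a conservation law for the flux `h = g^n |dF|^{p-2} f'`:
it says `h' = n g^{n-2} |dF|^{p-2} j(f) j'(f) ≥ 0`. Since `f'^{p-1} g^n ≤ h`, and for large `s`
we have `g ≥ C₁ s^δ / 2`, `j(f) ≤ 2 j(ĉ)` and `j' ≤ a`, this gives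
`h' ≤ A₁ h^θ s^{β₁} + A₂ s^{β₂}` with `θ = (p-2)/(p-1) < 1` and `β₁ ≤ β₂ = δ (n - p) < -1`
(this is where `δ > 1/(p-n)` enters). Integrating, `h ≤ K + M h^θ`, so `h` is bounded, and then
`(f' g)^{p-1} ≤ h g^{p-1-n} → 0` because `p - 1 < n`. The three limits follow from
`|dF|² = f'² + n j(f)²/g²` and `g ~ C₁ s^δ`.
-/

open Real Filter Topology

/-- Squared energy density `|dF|²(s) = f'(s)² + n · j(f(s))² / g(s)²` of the rotationally
symmetric map `F(s,θ) = (f(s),θ)` between `M_g` and `N_j`. -/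
noncomputable def energyDensitySq (n : ℕ) (g j f : ℝ → ℝ) (s : ℝ) : ℝ :=
  (deriv f s) ^ 2 + (n : ℝ) * (j (f s)) ^ 2 / (g s) ^ 2

/-- `f` solves the rotationally symmetric `p`-harmonic equation `τ_p(F) = 0`. -/
def SolvesPHarmonic (n : ℕ) (p : ℝ) (g j f : ℝ → ℝ) : Prop :=
  ∀ s : ℝ, 0 < s → 0 < energyDensitySq n g j f s →
    deriv (deriv f) s
      + ((n : ℝ) / (g s) ^ 2) * (g s * deriv g s * deriv f s - j (f s) * deriv j (f s))
      + (p - 2) * (energyDensitySq n g j f s)⁻¹ * deriv f s *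
          (deriv f s * deriv (deriv f) s
            + (n : ℝ) * (j (f s) / (g s) ^ 3) *
                (deriv j (f s) * deriv f s * g s - j (f s) * deriv g s)) = 0

theorem Real.add_rpow_le_two_rpow_mul {x y q : ℝ} (hx : 0 ≤ x) (hy : 0 ≤ y) (hq : 0 ≤ q) :
    (x + y) ^ q ≤ 2 ^ q * (x ^ q + y ^ q) := by
  have hmax : (max x y) ^ q ≤ x ^ q + y ^ q := by
    rcases le_total x y with h | h
    · simpa [max_eq_right h] using Real.rpow_nonneg hx q
    · simpa [max_eq_left h] using Real.rpow_nonneg hy q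
  calc (x + y) ^ q ≤ (2 * max x y) ^ q := by
        gcongr
        linarith [le_max_left x y, le_max_right x y]
    _ = 2 ^ q * (max x y) ^ q := Real.mul_rpow zero_le_two (le_max_of_le_left hx)
    _ ≤ 2 ^ q * (x ^ q + y ^ q) := by gcongr

theorem Real.exists_bound_of_le_add_mul_rpow {θ K M : ℝ} (hθ : θ < 1) (hM : 0 ≤ M) :
    ∃ R, ∀ x : ℝ, x ≤ K + M * x ^ θ → x ≤ R := by
  refine ⟨max 1 (2 * K) + (2 * M) ^ (1 - θ)⁻¹, fun x hle => ?_⟩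
  by_contra! hxR
  have hroot := Real.rpow_nonneg (by positivity : (0:ℝ) ≤ 2 * M) (1 - θ)⁻¹
  have hx0 : 0 < x := by linarith [le_max_left 1 (2 * K)]
  have hθ' : 0 < 1 - θ := by linarith
  have hMx : 2 * M ≤ x ^ (1 - θ) := by
    calc 2 * M = ((2 * M) ^ (1 - θ)⁻¹) ^ (1 - θ) := by
          rw [← Real.rpow_mul (by positivity), inv_mul_cancel₀ hθ'.ne', Real.rpow_one]
      _ ≤ x ^ (1 - θ) := by
          gcongr
          linarith [le_max_left 1 (2 * K)]
  have hsplit : x ^ θ * x ^ (1 - θ) = x := by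
    rw [← Real.rpow_add hx0, add_sub_cancel, Real.rpow_one]
  have habsorb : 2 * (M * x ^ θ) ≤ x := by
    calc 2 * (M * x ^ θ) = x ^ θ * (2 * M) := by ring
      _ ≤ x ^ θ * x ^ (1 - θ) := by gcongr
      _ = x := hsplit
  linarith [le_max_right 1 (2 * K)]

theorem Real.rpow_sub_rpow_div_le {S t β : ℝ} (hS : 0 < S) (hSt : S ≤ t) (hβ : β < -1) :
    (t ^ (β + 1) - S ^ (β + 1)) / (β + 1) ≤ S ^ (β + 1) / -(β + 1) := by
  rw [← neg_div_neg_eq, neg_sub]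
  gcongr
  · linarith
  · exact sub_le_self _ (Real.rpow_nonneg (hS.le.trans hSt) _)

theorem Real.rpow_le_mul_rpow_of_mul_rpow_le {C t δ G e : ℝ} (hC : 0 < C) (ht : 0 < t)
    (hG : C * t ^ δ ≤ G) (he : e ≤ 0) : G ^ e ≤ C ^ e * t ^ (δ * e) := by
  calc G ^ e ≤ (C * t ^ δ) ^ e := Real.rpow_le_rpow_of_nonpos (by positivity) hG he
    _ = C ^ e * t ^ (δ * e) := by
      rw [Real.mul_rpow hC.le (by positivity), ← Real.rpow_mul ht.le]

theorem pHarmonic_exponent_le {n p : ℝ} (hp : 2 ≤ p) (hpn : p ≤ n + 1) :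
    n - 2 - n * ((p - 2) / (p - 1)) ≤ n - p := by
  have hp1 : 0 < p - 1 := by linarith
  have : n * ((p - 2) / (p - 1)) = (p - 2) + (p - 2) * (n + 1 - p) / (p - 1) := by
    field_simp; ring
  have : 0 ≤ (p - 2) * (n + 1 - p) / (p - 1) := by
    apply div_nonneg _ hp1.le; apply mul_nonneg <;> linarith
  linarith

section GrowthBound

variable {h H : ℝ → ℝ} {S θ A₁ A₂ β₁ β₂ : ℝ}

theorem le_add_mul_rpow_of_hasDerivAt_le (hS : 0 < S) (hθ : 0 ≤ θ) (hβ₁ : β₁ < -1)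
    (hβ₂ : β₂ < -1) (hA₁ : 0 ≤ A₁) (hA₂ : 0 ≤ A₂) (hh : ∀ t, S ≤ t → 0 ≤ h t)
    (hderiv : ∀ t, S ≤ t → HasDerivAt h (H t) t) (hH₀ : ∀ t, S ≤ t → 0 ≤ H t)
    (hH : ∀ t, S ≤ t → H t ≤ A₁ * h t ^ θ * t ^ β₁ + A₂ * t ^ β₂) {s : ℝ} (hs : S ≤ s) :
    h s ≤ h S + A₂ * (S ^ (β₂ + 1) / -(β₂ + 1)) + A₁ * (S ^ (β₁ + 1) / -(β₁ + 1)) * h s ^ θ := by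
  have hmono : MonotoneOn h (Set.Ici S) := by
    refine monotoneOn_of_deriv_nonneg (convex_Ici S)
      (fun t ht => (hderiv t ht).continuousAt.continuousWithinAt) (fun t ht => ?_) fun t ht => ?_
    · rw [interior_Ici] at ht
      exact (hderiv t (le_of_lt ht)).differentiableAt.differentiableWithinAt
    · rw [interior_Ici] at ht
      rw [(hderiv t (le_of_lt ht)).deriv]
      exact hH₀ t (le_of_lt ht)
  have hprim : ∀ β, β < -1 → ∀ t, S ≤ t →
      HasDerivAt (fun u => (u ^ (β + 1) - S ^ (β + 1)) / (β + 1)) (t ^ β) t := by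
    intro β hβ t ht
    have hβ' : β + 1 ≠ 0 := by linarith
    refine (((Real.hasDerivAt_rpow_const (Or.inl (hS.trans_le ht).ne')).sub_const
      (S ^ (β + 1))).div_const (β + 1)).congr_deriv ?_
    rw [add_sub_cancel_right, mul_div_cancel_left₀ _ hβ']
  set B : ℝ → ℝ := fun u => h S + A₁ * h s ^ θ * ((u ^ (β₁ + 1) - S ^ (β₁ + 1)) / (β₁ + 1))
    + A₂ * ((u ^ (β₂ + 1) - S ^ (β₂ + 1)) / (β₂ + 1))
  have hB : ∀ t, S ≤ t → HasDerivAt B (A₁ * h s ^ θ * t ^ β₁ + A₂ * t ^ β₂) t := fun t ht =>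
    (((hprim β₁ hβ₁ t ht).const_mul _).const_add _).add ((hprim β₂ hβ₂ t ht).const_mul _)
  have hhB : h s ≤ B s := by
    refine image_le_of_deriv_right_le_deriv_boundary
      (fun t ht => (hderiv t ht.1).continuousAt.continuousWithinAt)
      (fun t ht => (hderiv t ht.1).hasDerivWithinAt) (by simp [B])
      (fun t ht => (hB t ht.1).continuousAt.continuousWithinAt)
      (fun t ht => (hB t ht.1).hasDerivWithinAt) (fun t ht => ?_) ⟨hs, le_rfl⟩
    have hts : h t ≤ h s := hmono ht.1 hs ht.2.le
    calc H t ≤ A₁ * h t ^ θ * t ^ β₁ + A₂ * t ^ β₂ := hH t ht.1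
      _ ≤ A₁ * h s ^ θ * t ^ β₁ + A₂ * t ^ β₂ := by
        have := Real.rpow_nonneg (hS.le.trans ht.1) β₁
        gcongr
        exact hh t ht.1
  calc h s ≤ B s := hhB
    _ ≤ h S + A₁ * h s ^ θ * (S ^ (β₁ + 1) / -(β₁ + 1)) + A₂ * (S ^ (β₂ + 1) / -(β₂ + 1)) := by
      have := Real.rpow_nonneg (hh s hs) θ
      have := Real.rpow_sub_rpow_div_le hS hs hβ₁
      have := Real.rpow_sub_rpow_div_le hS hs hβ₂
      simp only [B]
      gcongr
    _ = _ := by ring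

theorem exists_bound_of_hasDerivAt_le (hS : 0 < S) (hθ₀ : 0 ≤ θ) (hθ₁ : θ < 1)
    (hβ₁ : β₁ < -1) (hβ₂ : β₂ < -1) (hA₁ : 0 ≤ A₁) (hA₂ : 0 ≤ A₂) (hh : ∀ t, S ≤ t → 0 ≤ h t)
    (hderiv : ∀ t, S ≤ t → HasDerivAt h (H t) t) (hH₀ : ∀ t, S ≤ t → 0 ≤ H t)
    (hH : ∀ t, S ≤ t → H t ≤ A₁ * h t ^ θ * t ^ β₁ + A₂ * t ^ β₂) :
    ∃ R, ∀ s, S ≤ s → h s ≤ R := by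
  have hM : 0 ≤ A₁ * (S ^ (β₁ + 1) / -(β₁ + 1)) := by
    have : 0 < -(β₁ + 1) := by linarith
    have := Real.rpow_nonneg hS.le (β₁ + 1)
    positivity
  obtain ⟨R, hR⟩ := Real.exists_bound_of_le_add_mul_rpow hθ₁ hM
  exact ⟨R, fun s hs => hR _
    (le_add_mul_rpow_of_hasDerivAt_le hS hθ₀ hβ₁ hβ₂ hA₁ hA₂ hh hderiv hH₀ hH hs)⟩

end GrowthBound

theorem exists_tendsto_of_deriv_nonneg {f : ℝ → ℝ} {a B : ℝ}
    (hdiff : ∀ t, a ≤ t → DifferentiableAt ℝ f t) (hf' : ∀ t, a < t → 0 ≤ deriv f t)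
    (hB : ∀ t, a ≤ t → f t ≤ B) : ∃ c, f a ≤ c ∧ Tendsto f atTop (𝓝 c) := by
  have hmono : MonotoneOn f (Set.Ici a) := by
    refine monotoneOn_of_deriv_nonneg (convex_Ici a)
      (fun t ht => (hdiff t ht).continuousAt.continuousWithinAt) (fun t ht => ?_) fun t ht => ?_
    · rw [interior_Ici] at ht
      exact (hdiff t (le_of_lt ht)).differentiableWithinAt
    · rw [interior_Ici] at ht
      exact hf' t ht
  set F : ℝ → ℝ := fun s => f (max s a)
  have hF : Monotone F := fun x y hxy =>
    hmono (le_max_right x a) (le_max_right y a) (max_le_max hxy le_rfl)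
  have hFB : BddAbove (Set.range F) := ⟨B, by rintro _ ⟨s, rfl⟩; exact hB _ (le_max_right s a)⟩
  refine ⟨⨆ s, F s, by simpa [F] using le_ciSup hFB a, (tendsto_atTop_ciSup hF hFB).congr' ?_⟩
  filter_upwards [eventually_ge_atTop a] with s hs
  simp [F, max_eq_left hs]

theorem eventually_mul_rpow_le_of_tendsto_div {g : ℝ → ℝ} {C δ c : ℝ} (hC : 0 < C) (hc : c < 1)
    (hg : Tendsto (fun s => g s / (C * s ^ δ)) atTop (𝓝 1)) :
    ∀ᶠ s in atTop, c * C * s ^ δ ≤ g s := by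
  filter_upwards [hg.eventually (eventually_ge_nhds hc), eventually_gt_atTop 0] with s hs hs₀
  have : 0 < C * s ^ δ := by positivity
  rw [le_div_iff₀ this] at hs
  linarith

noncomputable def pFlux (n : ℕ) (p : ℝ) (g j f : ℝ → ℝ) (s : ℝ) : ℝ :=
  g s ^ n * energyDensitySq n g j f s ^ ((p - 2) / 2) * deriv f s

section PFlux

variable {n : ℕ} {p : ℝ} {g j f : ℝ → ℝ} {s L : ℝ}

theorem hasDerivAt_energyDensitySq (hf : DifferentiableAt ℝ f s)
    (hf' : DifferentiableAt ℝ (deriv f) s) (hg : DifferentiableAt ℝ g s)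
    (hj : DifferentiableAt ℝ j (f s)) (hgs : g s ≠ 0) :
    HasDerivAt (energyDensitySq n g j f)
      (2 * deriv f s * deriv (deriv f) s + 2 * n * (j (f s) / g s ^ 3) *
        (deriv j (f s) * deriv f s * g s - j (f s) * deriv g s)) s := by
  have hjf : HasDerivAt (fun t => j (f t)) (deriv j (f s) * deriv f s) s :=
    hj.hasDerivAt.comp s hf.hasDerivAt
  have hquot := ((hjf.pow 2).const_mul (n : ℝ)).fun_div (hg.hasDerivAt.pow 2) (pow_ne_zero 2 hgs)
  refine ((hf'.hasDerivAt.pow 2).add hquot).congr_deriv ?_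
  simp only [Pi.pow_apply]
  field_simp
  ring

theorem SolvesPHarmonic.hasDerivAt_pFlux (hsol : SolvesPHarmonic n p g j f)
    (hs : 0 < s) (hf : DifferentiableAt ℝ f s) (hf' : DifferentiableAt ℝ (deriv f) s)
    (hg : DifferentiableAt ℝ g s) (hj : DifferentiableAt ℝ j (f s)) (hgs : 0 < g s)
    (hE : 0 < energyDensitySq n g j f s) :
    HasDerivAt (pFlux n p g j f) (n * g s ^ n / g s ^ 2 *
      energyDensitySq n g j f s ^ ((p - 2) / 2) * (j (f s) * deriv j (f s))) s := by
  have hode := hsol s hs hE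
  set E := energyDensitySq n g j f
  have hErpow := (Real.hasDerivAt_rpow_const (p := (p - 2) / 2) (Or.inl hE.ne')).comp s
    (hasDerivAt_energyDensitySq (n := n) hf hf' hg hj hgs.ne')
  have hgn : (n : ℝ) * g s ^ (n - 1) = n * g s ^ n / g s := by
    cases n with
    | zero => simp
    | succ k => rw [pow_succ]; field_simp; simp
  refine (((hg.hasDerivAt.pow n).mul hErpow).mul hf'.hasDerivAt).congr_deriv ?_
  rw [Real.rpow_sub_one hE.ne', hgn]
  simp only [Function.comp_apply, Pi.mul_apply, Pi.pow_apply]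
  set X := E s ^ ((p - 2) / 2)
  have hE0 := hE.ne'
  field_simp at hode ⊢
  linear_combination X * hode

theorem sq_deriv_le_energyDensitySq : deriv f s ^ 2 ≤ energyDensitySq n g j f s :=
  le_add_of_nonneg_right (by positivity)

theorem energyDensitySq_pos (hf : 0 < deriv f s) : 0 < energyDensitySq n g j f s :=
  (pow_pos hf 2).trans_le sq_deriv_le_energyDensitySq

theorem rpow_mul_pow_le_pFlux (hp : 2 ≤ p) (hf : 0 < deriv f s) (hg : 0 < g s) :
    deriv f s ^ (p - 1) * g s ^ n ≤ pFlux n p g j f s := by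
  have hE : deriv f s ^ (p - 2) ≤ energyDensitySq n g j f s ^ ((p - 2) / 2) := by
    calc deriv f s ^ (p - 2) = (deriv f s ^ 2) ^ ((p - 2) / 2) := by
          rw [← Real.rpow_natCast, ← Real.rpow_mul hf.le]; ring_nf
      _ ≤ _ := by
          gcongr
          exact sq_deriv_le_energyDensitySq
  calc deriv f s ^ (p - 1) * g s ^ n = g s ^ n * deriv f s ^ (p - 2) * deriv f s := by
        rw [show p - 1 = p - 2 + 1 by ring, Real.rpow_add_one hf.ne']; ring
    _ ≤ pFlux n p g j f s := by unfold pFlux; gcongr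

theorem pFlux_pos (hp : 2 ≤ p) (hf : 0 < deriv f s) (hg : 0 < g s) : 0 < pFlux n p g j f s :=
  lt_of_lt_of_le (by positivity) (rpow_mul_pow_le_pFlux hp hf hg)

theorem energyDensitySq_rpow_le {J : ℝ} (hp : 2 ≤ p) (hf : 0 < deriv f s) (hg : 0 < g s)
    (hj : 0 ≤ j (f s)) (hjJ : j (f s) ≤ J) :
    energyDensitySq n g j f s ^ ((p - 2) / 2) ≤
      2 ^ ((p - 2) / 2) * (deriv f s ^ (p - 2) + (n * J ^ 2) ^ ((p - 2) / 2) / g s ^ (p - 2)) := by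
  have hq : 0 ≤ (p - 2) / 2 := by linarith
  have hsq : ∀ x : ℝ, 0 ≤ x → (x ^ 2) ^ ((p - 2) / 2) = x ^ (p - 2) := fun x hx => by
    rw [← Real.rpow_natCast, ← Real.rpow_mul hx]; ring_nf
  calc energyDensitySq n g j f s ^ ((p - 2) / 2)
      ≤ (deriv f s ^ 2 + n * J ^ 2 / g s ^ 2) ^ ((p - 2) / 2) := by
        unfold energyDensitySq
        gcongr
    _ ≤ 2 ^ ((p - 2) / 2) * ((deriv f s ^ 2) ^ ((p - 2) / 2)
          + (n * J ^ 2 / g s ^ 2) ^ ((p - 2) / 2)) :=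
        Real.add_rpow_le_two_rpow_mul (by positivity) (by positivity) hq
    _ = _ := by rw [Real.div_rpow (by positivity) (by positivity), hsq _ hf.le, hsq _ hg.le]

theorem pFlux_deriv_le {J a : ℝ} (hp : 2 ≤ p) (hf : 0 < deriv f s) (hg : 0 < g s)
    (hj : 0 ≤ j (f s)) (hjJ : j (f s) ≤ J) (hj' : 0 ≤ deriv j (f s)) (hj'a : deriv j (f s) ≤ a) :
    n * g s ^ n / g s ^ 2 * energyDensitySq n g j f s ^ ((p - 2) / 2) * (j (f s) * deriv j (f s))
      ≤ n * J * a * 2 ^ ((p - 2) / 2) *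
        (pFlux n p g j f s ^ ((p - 2) / (p - 1)) * g s ^ ((n : ℝ) - 2 - n * ((p - 2) / (p - 1)))
          + (n * J ^ 2) ^ ((p - 2) / 2) * g s ^ ((n : ℝ) - p)) := by
  set θ := (p - 2) / (p - 1)
  set h := pFlux n p g j f s
  have hp1 : p - 1 ≠ 0 := by linarith
  have hh : 0 < h := by
    refine lt_of_lt_of_le ?_ (rpow_mul_pow_le_pFlux hp hf hg)
    positivity
  have hv : deriv f s ^ (p - 2) ≤ h ^ θ / (g s ^ (n : ℝ)) ^ θ := by
    rw [← Real.div_rpow hh.le (by positivity)]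
    calc deriv f s ^ (p - 2) = (deriv f s ^ (p - 1)) ^ θ := by
          rw [← Real.rpow_mul hf.le]; congr 1; simp only [θ]; field_simp
      _ ≤ (h / g s ^ (n : ℝ)) ^ θ := by
          refine Real.rpow_le_rpow (by positivity) ?_ (div_nonneg (by linarith) (by linarith))
          rw [le_div_iff₀ (by positivity), Real.rpow_natCast]
          exact rpow_mul_pow_le_pFlux hp hf hg
  have hpow₁ : g s ^ n / g s ^ 2 * (h ^ θ / (g s ^ (n : ℝ)) ^ θ)
      = h ^ θ * g s ^ ((n : ℝ) - 2 - n * θ) := by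
    rw [Real.rpow_sub hg, Real.rpow_sub hg, ← Real.rpow_mul hg.le]
    norm_cast
    field_simp
  have hpow₂ : g s ^ n / g s ^ 2 * ((n * J ^ 2) ^ ((p - 2) / 2) / g s ^ (p - 2))
      = (n * J ^ 2) ^ ((p - 2) / 2) * g s ^ ((n : ℝ) - p) := by
    rw [show (n : ℝ) - p = n - 2 - (p - 2) by ring, Real.rpow_sub hg _ (p - 2),
      Real.rpow_sub hg (n : ℝ) 2, Real.rpow_natCast, Real.rpow_two]
    ring
  calc n * g s ^ n / g s ^ 2 * energyDensitySq n g j f s ^ ((p - 2) / 2) * (j (f s) * deriv j (f s))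
      ≤ n * g s ^ n / g s ^ 2 * (2 ^ ((p - 2) / 2) *
          (h ^ θ / (g s ^ (n : ℝ)) ^ θ + (n * J ^ 2) ^ ((p - 2) / 2) / g s ^ (p - 2))) *
          (J * a) := by
        gcongr
        · exact (energyDensitySq_rpow_le hp hf hg hj hjJ).trans (by gcongr)
        · linarith
    _ = _ := by rw [← hpow₁, ← hpow₂]; ring

theorem pFlux_deriv_le_rpow {C δ J a : ℝ} (hp : 2 ≤ p) (hnp : n ≤ p) (hpn : p ≤ n + 1)
    (hC : 0 < C) (hs : 0 < s) (hgC : C * s ^ δ ≤ g s) (hf : 0 < deriv f s) (hg : 0 < g s)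
    (hj : 0 ≤ j (f s)) (hjJ : j (f s) ≤ J) (hj' : 0 ≤ deriv j (f s)) (hj'a : deriv j (f s) ≤ a) :
    n * g s ^ n / g s ^ 2 * energyDensitySq n g j f s ^ ((p - 2) / 2) * (j (f s) * deriv j (f s))
      ≤ n * J * a * 2 ^ ((p - 2) / 2) * C ^ ((n : ℝ) - 2 - n * ((p - 2) / (p - 1))) *
          pFlux n p g j f s ^ ((p - 2) / (p - 1)) *
          s ^ (δ * ((n : ℝ) - 2 - n * ((p - 2) / (p - 1))))
        + n * J * a * 2 ^ ((p - 2) / 2) * (n * J ^ 2) ^ ((p - 2) / 2) * C ^ ((n : ℝ) - p) *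
          s ^ (δ * ((n : ℝ) - p)) := by
  have he₂ : (n : ℝ) - p ≤ 0 := by linarith
  have hg₁ := Real.rpow_le_mul_rpow_of_mul_rpow_le hC hs hgC
    ((pHarmonic_exponent_le hp hpn).trans he₂)
  have hg₂ := Real.rpow_le_mul_rpow_of_mul_rpow_le hC hs hgC he₂
  have := Real.rpow_nonneg (pFlux_pos (n := n) (j := j) hp hf hg).le ((p - 2) / (p - 1))
  have hJ : 0 ≤ J := hj.trans hjJ
  have ha : 0 ≤ a := hj'.trans hj'a
  set e₁ := (n : ℝ) - 2 - n * ((p - 2) / (p - 1))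
  calc _ ≤ n * J * a * 2 ^ ((p - 2) / 2) * (pFlux n p g j f s ^ ((p - 2) / (p - 1)) * g s ^ e₁
          + (n * J ^ 2) ^ ((p - 2) / 2) * g s ^ ((n : ℝ) - p)) :=
        pFlux_deriv_le hp hf hg hj hjJ hj' hj'a
    _ ≤ n * J * a * 2 ^ ((p - 2) / 2) * (pFlux n p g j f s ^ ((p - 2) / (p - 1)) *
          (C ^ e₁ * s ^ (δ * e₁)) + (n * J ^ 2) ^ ((p - 2) / 2) *
          (C ^ ((n : ℝ) - p) * s ^ (δ * ((n : ℝ) - p)))) := by gcongr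
    _ = _ := by ring

theorem SolvesPHarmonic.exists_pFlux_le (hsol : SolvesPHarmonic n p g j f) {C δ J a : ℝ}
    (hp : 2 ≤ p) (hnp : n < p) (hpn : p ≤ n + 1) (hδ : (p - n)⁻¹ < δ) (hC : 0 < C)
    (hreg : ∀ᶠ t in atTop, DifferentiableAt ℝ f t ∧ DifferentiableAt ℝ (deriv f) t ∧
      DifferentiableAt ℝ g t ∧ DifferentiableAt ℝ j (f t))
    (hpos : ∀ᶠ t in atTop, 0 < deriv f t ∧ 0 < g t ∧ 0 ≤ j (f t) ∧ 0 ≤ deriv j (f t))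
    (hbound : ∀ᶠ t in atTop, C * t ^ δ ≤ g t ∧ j (f t) ≤ J ∧ deriv j (f t) ≤ a) :
    ∃ R, ∀ᶠ t in atTop, pFlux n p g j f t ≤ R := by
  have hpn₀ : 0 < p - n := by linarith
  have hδ₀ : 0 < δ := (inv_pos.2 hpn₀).trans hδ
  have hβ₂ : δ * ((n : ℝ) - p) < -1 := by
    linarith [(inv_lt_iff_one_lt_mul₀ hpn₀).1 hδ]
  have hβ₁ : δ * ((n : ℝ) - 2 - n * ((p - 2) / (p - 1))) < -1 :=
    (mul_le_mul_of_nonneg_left (pHarmonic_exponent_le hp hpn) hδ₀.le).trans_lt hβ₂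
  obtain ⟨S, hS⟩ :=
    (((hreg.and hpos).and hbound).and (eventually_gt_atTop 0)).exists_forall_of_atTop
  obtain ⟨⟨⟨-, -, -, hjS, hj'S⟩, -, hjJ, hj'a⟩, hS₀⟩ := hS S le_rfl
  have hJ : 0 ≤ J := hjS.trans hjJ
  have ha : 0 ≤ a := hj'S.trans hj'a
  have hderiv : ∀ t, S ≤ t → HasDerivAt (pFlux n p g j f) (n * g t ^ n / g t ^ 2 *
      energyDensitySq n g j f t ^ ((p - 2) / 2) * (j (f t) * deriv j (f t))) t := fun t ht => by
    obtain ⟨⟨⟨⟨hf, hf', hg, hj⟩, hv, hgt, -⟩, -⟩, ht₀⟩ := hS t ht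
    exact hsol.hasDerivAt_pFlux ht₀ hf hf' hg hj hgt (energyDensitySq_pos hv)
  have hflux : ∀ t, S ≤ t → 0 ≤ pFlux n p g j f t := fun t ht => by
    obtain ⟨⟨-, hv, hgt, -⟩, -⟩ := (hS t ht).1
    exact (pFlux_pos hp hv hgt).le
  have hderiv₀ : ∀ t, S ≤ t → 0 ≤ n * g t ^ n / g t ^ 2 *
      energyDensitySq n g j f t ^ ((p - 2) / 2) * (j (f t) * deriv j (f t)) := fun t ht => by
    obtain ⟨⟨-, hv, hgt, hj, hj'⟩, -⟩ := (hS t ht).1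
    have := Real.rpow_nonneg (energyDensitySq_pos (n := n) (g := g) (j := j) hv).le ((p - 2) / 2)
    positivity
  obtain ⟨R, hR⟩ := exists_bound_of_hasDerivAt_le (θ := (p - 2) / (p - 1))
    (A₁ := n * J * a * 2 ^ ((p - 2) / 2) * C ^ ((n : ℝ) - 2 - n * ((p - 2) / (p - 1))))
    (A₂ := n * J * a * 2 ^ ((p - 2) / 2) * (n * J ^ 2) ^ ((p - 2) / 2) * C ^ ((n : ℝ) - p))
    hS₀ (div_nonneg (by linarith) (by linarith)) ((div_lt_one (by linarith)).2 (by linarith))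
    hβ₁ hβ₂ (by positivity) (by positivity) hflux hderiv hderiv₀ fun t ht => by
      obtain ⟨⟨⟨-, hv, hgt, hj, hj'⟩, hgC, hjJ, hj'a⟩, ht₀⟩ := hS t ht
      exact pFlux_deriv_le_rpow hp hnp.le hpn hC ht₀ hgC hv hgt hj hjJ hj' hj'a
  exact ⟨R, eventually_atTop.2 ⟨S, hR⟩⟩

theorem tendsto_deriv_mul_of_pFlux_le {R : ℝ} (hp : 2 ≤ p) (hpn : p - 1 < n)
    (hR : ∀ᶠ t in atTop, pFlux n p g j f t ≤ R) (hpos : ∀ᶠ t in atTop, 0 < deriv f t ∧ 0 < g t)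
    (hg : Tendsto g atTop atTop) :
    Tendsto (fun t => deriv f t * g t) atTop (𝓝 0) := by
  have hp1 : 0 < p - 1 := by linarith
  have hdecay : Tendsto (fun t => R * g t ^ (-(n + 1 - p))) atTop (𝓝 0) := by
    have := ((tendsto_rpow_neg_atTop (y := n + 1 - p) (by linarith)).comp hg).const_mul R
    rwa [mul_zero] at this
  have hpow : Tendsto (fun t => (deriv f t * g t) ^ (p - 1)) atTop (𝓝 0) := by
    refine tendsto_of_tendsto_of_tendsto_of_le_of_le' tendsto_const_nhds hdecay ?_ ?_
    · filter_upwards [hpos] with t ⟨hv, hgt⟩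
      positivity
    filter_upwards [hR, hpos] with t hRt ⟨hv, hgt⟩
    calc (deriv f t * g t) ^ (p - 1) = deriv f t ^ (p - 1) * g t ^ n * g t ^ (-(n + 1 - p)) := by
          rw [Real.mul_rpow hv.le hgt.le, mul_assoc, ← Real.rpow_natCast, ← Real.rpow_add hgt]
          ring_nf
      _ ≤ R * g t ^ (-(n + 1 - p)) := by
          gcongr
          exact (rpow_mul_pow_le_pFlux hp hv hgt).trans hRt
  have hroot := hpow.rpow_const (p := (p - 1)⁻¹) (Or.inr (inv_nonneg.2 hp1.le))
  rw [Real.zero_rpow (inv_ne_zero hp1.ne')] at hroot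
  refine hroot.congr' ?_
  filter_upwards [hpos] with t ⟨hv, hgt⟩
  rw [← Real.rpow_mul (by positivity), mul_inv_cancel₀ hp1.ne', Real.rpow_one]

theorem SolvesPHarmonic.tendsto_deriv_mul_zero (hsol : SolvesPHarmonic n p g j f)
    {C δ J a : ℝ} (hp : 2 ≤ p) (hnp : n < p) (hpn : p < n + 1) (hδ : (p - n)⁻¹ < δ) (hC : 0 < C)
    (hreg : ∀ᶠ t in atTop, DifferentiableAt ℝ f t ∧ DifferentiableAt ℝ (deriv f) t ∧
      DifferentiableAt ℝ g t ∧ DifferentiableAt ℝ j (f t))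
    (hpos : ∀ᶠ t in atTop, 0 < deriv f t ∧ 0 < g t ∧ 0 ≤ j (f t) ∧ 0 ≤ deriv j (f t))
    (hbound : ∀ᶠ t in atTop, C * t ^ δ ≤ g t ∧ j (f t) ≤ J ∧ deriv j (f t) ≤ a) :
    Tendsto (fun t => deriv f t * g t) atTop (𝓝 0) := by
  obtain ⟨R, hR⟩ := hsol.exists_pFlux_le hp hnp hpn.le hδ hC hreg hpos hbound
  have hδ₀ : 0 < δ := (inv_pos.2 (sub_pos.2 hnp)).trans hδ
  have hg : Tendsto g atTop atTop := tendsto_atTop_mono' _ (hbound.mono fun t ht => ht.1)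
    ((tendsto_rpow_atTop hδ₀).const_mul_atTop hC)
  exact tendsto_deriv_mul_of_pFlux_le hp (by linarith) hR (hpos.mono fun t ht => ⟨ht.1, ht.2.1⟩) hg

theorem tendsto_sq_deriv_mul_div (hvg : Tendsto (fun s => deriv f s * g s) atTop (𝓝 0))
    (hjf : Tendsto (fun s => j (f s)) atTop (𝓝 L)) (hL : (n : ℝ) * L ^ 2 ≠ 0) :
    Tendsto (fun s => deriv f s ^ 2 * g s ^ 2 / (n * j (f s) ^ 2)) atTop (𝓝 0) := by
  have := (hvg.pow 2).div ((hjf.pow 2).const_mul (n : ℝ)) hL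
  simp only [ne_eq, OfNat.ofNat_ne_zero, not_false_eq_true, zero_pow, zero_div, mul_pow] at this
  exact this

theorem energyDensitySq_mul_sq_div_eq (hg : g s ≠ 0) (hn : (n : ℝ) ≠ 0)
    (hj : j (f s) ≠ 0) :
    energyDensitySq n g j f s * g s ^ 2 / (n * j (f s) ^ 2) =
      deriv f s ^ 2 * g s ^ 2 / (n * j (f s) ^ 2) + 1 := by
  unfold energyDensitySq
  field_simp

theorem tendsto_energyDensitySq_mul_sq_div
    (h₀ : Tendsto (fun s => deriv f s ^ 2 * g s ^ 2 / (n * j (f s) ^ 2)) atTop (𝓝 0))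
    (hpos : ∀ᶠ s in atTop, g s ≠ 0 ∧ j (f s) ≠ 0) (hn : (n : ℝ) ≠ 0) :
    Tendsto (fun s => energyDensitySq n g j f s * g s ^ 2 / (n * j (f s) ^ 2)) atTop (𝓝 1) := by
  refine (zero_add (1 : ℝ) ▸ h₀.add_const 1).congr' ?_
  filter_upwards [hpos] with s ⟨hg, hj⟩
  exact (energyDensitySq_mul_sq_div_eq hg hn hj).symm

theorem tendsto_energyDensitySq_mul_rpow {C₁ δ : ℝ} (hC₁ : 0 < C₁)
    (hE : Tendsto (fun s => energyDensitySq n g j f s * g s ^ 2 / (n * j (f s) ^ 2)) atTop (𝓝 1))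
    (hjf : Tendsto (fun s => j (f s)) atTop (𝓝 L)) (hpos : ∀ᶠ s in atTop, g s ≠ 0 ∧ j (f s) ≠ 0)
    (hn : (n : ℝ) ≠ 0) (hgasym : Tendsto (fun s => g s / (C₁ * s ^ δ)) atTop (𝓝 1)) :
    Tendsto (fun s => energyDensitySq n g j f s * s ^ (2 * δ)) atTop (𝓝 (n * L ^ 2 / C₁ ^ 2)) := by
  have hlim := (hE.mul ((hjf.pow 2).const_mul (n : ℝ))).div
    ((hgasym.pow 2).const_mul (C₁ ^ 2)) (by positivity)
  rw [one_mul, one_pow, mul_one] at hlim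
  refine hlim.congr' ?_
  filter_upwards [hpos, eventually_gt_atTop 0] with s ⟨hg, hj⟩ hs
  have hsδ : s ^ δ ≠ 0 := (Real.rpow_pos_of_pos hs δ).ne'
  rw [Pi.div_apply, show s ^ (2 * δ) = (s ^ δ) ^ 2 by
    rw [mul_comm, Real.rpow_mul hs.le, Real.rpow_two]]
  field_simp

end PFlux

theorem energy_asymptotics_general (n : ℕ) (p a C₁ δ : ℝ) (g j f : ℝ → ℝ)
    (hp₁ : max 2 (n : ℝ) < p) (hp₂ : p < (n : ℝ) + 1)
    (hC₁ : 0 < C₁) (hδ : (p - (n : ℝ))⁻¹ < δ)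
    (hg : ContDiffOn ℝ 1 g (Set.Ioi 0)) (hj : ContDiffOn ℝ 1 j (Set.Ioi 0))
    (hgpos : ∀ s > (0:ℝ), 0 < g s) (hjpos : ∀ t > (0:ℝ), 0 < j t)
    (hj' : ∀ t > (0:ℝ), 0 < deriv j t ∧ deriv j t ≤ a)
    (hgasym : Tendsto (fun s => g s / (C₁ * s ^ δ)) atTop (𝓝 1))
    (hf : ContDiffOn ℝ 2 f (Set.Ici 0))
    (hfbdd : ∃ B, ∀ s ≥ (0:ℝ), |f s| ≤ B)
    (hfpos : ∀ s > (0:ℝ), 0 < f s) (hf'pos : ∀ s > (0:ℝ), 0 < deriv f s)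
    (hsol : SolvesPHarmonic n p g j f) :
    ∃ c : ℝ, 0 < c ∧ Tendsto f atTop (𝓝 c) ∧
      Tendsto (fun s : ℝ => (deriv f s) ^ 2 * (g s) ^ 2 / ((n : ℝ) * (j (f s)) ^ 2))
        atTop (𝓝 0) ∧
      Tendsto (fun s : ℝ => energyDensitySq n g j f s * (g s) ^ 2 / ((n : ℝ) * (j (f s)) ^ 2))
        atTop (𝓝 1) ∧
      Tendsto (fun s : ℝ => energyDensitySq n g j f s * s ^ (2 * δ))
        atTop (𝓝 ((n : ℝ) * (j c) ^ 2 / C₁ ^ 2)) := by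
  have hp : 2 < p := (le_max_left _ _).trans_lt hp₁
  have hnp : (n : ℝ) < p := (le_max_right _ _).trans_lt hp₁
  have hn : (n : ℝ) ≠ 0 := by linarith
  have hreg : ∀ t > (0:ℝ), DifferentiableAt ℝ f t ∧ DifferentiableAt ℝ (deriv f) t ∧
      DifferentiableAt ℝ g t ∧ DifferentiableAt ℝ j (f t) := fun t ht =>
    have hft := hf.contDiffAt (Ici_mem_nhds ht)
    ⟨hft.differentiableAt two_ne_zero,
      (hft.derivWithin (m := 1) le_rfl).differentiableAt one_ne_zero,
      (hg.contDiffAt (Ioi_mem_nhds ht)).differentiableAt one_ne_zero,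
      (hj.contDiffAt (Ioi_mem_nhds (hfpos t ht))).differentiableAt one_ne_zero⟩
  obtain ⟨B, hB⟩ := hfbdd
  obtain ⟨c, hfc₁, hfc⟩ := exists_tendsto_of_deriv_nonneg (a := 1)
    (fun t ht => (hreg t (by linarith)).1) (fun t ht => (hf'pos t (by linarith)).le)
    (fun t ht => (abs_le.1 (hB t (by linarith))).2)
  have hc : 0 < c := (hfpos 1 one_pos).trans_le hfc₁
  have hjf : Tendsto (fun s => j (f s)) atTop (𝓝 (j c)) :=
    ((hj.continuousOn.continuousAt (Ioi_mem_nhds hc)).tendsto.comp hfc)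
  have hgC := eventually_mul_rpow_le_of_tendsto_div (c := 1 / 2) hC₁ (by norm_num) hgasym
  have hpos : ∀ᶠ t in atTop, 0 < deriv f t ∧ 0 < g t ∧ 0 < j (f t) ∧ 0 < deriv j (f t) := by
    filter_upwards [eventually_gt_atTop 0] with t ht
    exact ⟨hf'pos t ht, hgpos t ht, hjpos _ (hfpos t ht), (hj' _ (hfpos t ht)).1⟩
  have hvg := hsol.tendsto_deriv_mul_zero hp.le hnp hp₂ hδ (by positivity : 0 < 1 / 2 * C₁)
    (eventually_gt_atTop 0 |>.mono hreg)
    (hpos.mono fun t ht => ⟨ht.1, ht.2.1, ht.2.2.1.le, ht.2.2.2.le⟩)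
    (hgC.and ((hjf.eventually (eventually_le_nhds (by linarith [hjpos c hc] : j c < 2 * j c))).and
      (eventually_gt_atTop 0 |>.mono fun t ht => (hj' _ (hfpos t ht)).2)))
  have hL : (n : ℝ) * j c ^ 2 ≠ 0 := mul_ne_zero hn (pow_ne_zero 2 (hjpos c hc).ne')
  have hlim₁ := tendsto_sq_deriv_mul_div hvg hjf hL
  have hne : ∀ᶠ t in atTop, g t ≠ 0 ∧ j (f t) ≠ 0 :=
    hpos.mono fun t ht => ⟨ht.2.1.ne', ht.2.2.1.ne'⟩
  have hlim₂ := tendsto_energyDensitySq_mul_sq_div hlim₁ hne hn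
  exact ⟨c, hc, hfc, hlim₁, hlim₂, tendsto_energyDensitySq_mul_rpow hC₁ hlim₂ hjf hne hn hgasym⟩

/-- Under hypotheses (H), with `ĉ = lim_{s→∞} f(s) > 0`, one has
`f'(s)²·g(s)²/(n·j(f(s))²) → 0`, `|dF|²(s)·g(s)²/(n·j(f(s))²) → 1`, and
`|dF|²(s) ~ n·j(ĉ)²/C₁² · s^{-2δ}` as `s → +∞`. -/
theorem energy_asymptotics (n : ℕ) (p a C₁ δ : ℝ) (g j f : ℝ → ℝ)
    (hn : 2 ≤ n) (hp₁ : max 2 (n : ℝ) < p) (hp₂ : p < (n : ℝ) + 1)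
    (ha : 0 < a) (hC₁ : 0 < C₁) (hδ : (p - (n : ℝ))⁻¹ < δ)
    (hg : ContDiffOn ℝ 1 g (Set.Ioi 0)) (hj : ContDiffOn ℝ 1 j (Set.Ioi 0))
    (hg0 : g 0 = 0) (hj0 : j 0 = 0)
    (hg'0 : HasDerivWithinAt g 1 (Set.Ici 0) 0) (hj'0 : HasDerivWithinAt j 1 (Set.Ici 0) 0)
    (hgpos : ∀ s > (0:ℝ), 0 < g s) (hjpos : ∀ t > (0:ℝ), 0 < j t)
    (hj' : ∀ t > (0:ℝ), 0 < deriv j t ∧ deriv j t ≤ a)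
    (hg' : ∀ᶠ s in atTop, 0 < deriv g s)
    (hgasym : Tendsto (fun s => g s / (C₁ * s ^ δ)) atTop (𝓝 1))
    (hf : ContDiffOn ℝ 2 f (Set.Ici 0))
    (hfbdd : ∃ B, ∀ s ≥ (0:ℝ), |f s| ≤ B)
    (hf0 : f 0 = 0)
    (hfpos : ∀ s > (0:ℝ), 0 < f s) (hf'pos : ∀ s > (0:ℝ), 0 < deriv f s)
    (hsol : SolvesPHarmonic n p g j f) :
    ∃ c : ℝ, 0 < c ∧ Tendsto f atTop (𝓝 c) ∧
      Tendsto (fun s : ℝ => (deriv f s) ^ 2 * (g s) ^ 2 / ((n : ℝ) * (j (f s)) ^ 2))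
        atTop (𝓝 0) ∧
      Tendsto (fun s : ℝ => energyDensitySq n g j f s * (g s) ^ 2 / ((n : ℝ) * (j (f s)) ^ 2))
        atTop (𝓝 1) ∧
      Tendsto (fun s : ℝ => energyDensitySq n g j f s * s ^ (2 * δ))
        atTop (𝓝 ((n : ℝ) * (j c) ^ 2 / C₁ ^ 2)) :=
  energy_asymptotics_general n p a C₁ δ g j f hp₁ hp₂ hC₁ hδ hg hj hgpos hjpos hj' hgasym hf hfbdd
    hfpos hf'pos hsol
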